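/- arXiv:1406.1717 — 2 statements merged into one kernel-verified Lean document; each statement's English description precedes it below -/
import Mathlib

section
/- Assume the invariant setting with S_A ≠ ∅, and write p_A = max S_A. Assume a_A < p_A, every element of S_B is less than a_B, a_B is less than every element of L_A \ S_A, and a_B is less than every element of L_B \ S_B (case 2 of the case analysis). Then: S'_A = S_A \ {a_A}; S'_B = S_B; a_B is the B-side peek, i.e. a_B = min((L_B ∪ {a_B}) \ S'_B), and a_B is less than every element of (L_A \ {a_A}) \ S'_A; and H_h(L') = (H_h(L_A ∪ L_B) \ {a_A}) ∪ {a_B} = S'_A ∪ S_B ∪ {a_B}. -/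
/-! `H_m(L)` is the unique initial segment of `L` of size `m`, so every claim reduces to showing
that a set is an initial segment of the right size. Initial segments restrict to each part of a
disjoint union, survive deleting an element, and grow by any element lying below everything
outside them. Here `a_A ∈ S_A` because `a_A < max S_A`, and `a_B` lies above `S_B` and below
everything outside `H_h(L_A ∪ L_B)`. -/

/-- `smallSet m L` is `H_m(L)`: the set of the `m` smallest elements of the finset `L`
(the first `m` entries of the increasing enumeration of `L`). -/
def smallSet {α : Type*} [LinearOrder α] (m : ℕ) (L : Finset α) : Finset α :=
  ((L.sort (· ≤ ·)).take m).toFinset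

namespace Finset

variable {α : Type*} [LinearOrder α]

def IsInitialSegment (S L : Finset α) : Prop :=
  S ⊆ L ∧ ∀ x ∈ S, ∀ y ∈ L \ S, x < y

theorem min_insert_of_forall_le {a : α} {s : Finset α} (h : ∀ y ∈ s, a ≤ y) :
    (insert a s).min = a := by
  rw [min_insert]
  exact min_eq_left (Finset.le_min fun y hy => WithTop.coe_le_coe.mpr (h y hy))

namespace IsInitialSegment

variable {S T L : Finset α}

theorem eq_of_card_eq (hS : IsInitialSegment S L) (hT : IsInitialSegment T L)
    (hcard : S.card = T.card) : S = T := by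
  by_contra hne
  obtain ⟨x, hxS, hxT⟩ : ∃ x ∈ S, x ∉ T :=
    not_subset.mp fun hST => hne (eq_of_subset_of_card_le hST hcard.ge)
  obtain ⟨y, hyT, hyS⟩ : ∃ y ∈ T, y ∉ S :=
    not_subset.mp fun hTS => hne (eq_of_subset_of_card_le hTS hcard.le).symm
  exact (hS.2 x hxS y (mem_sdiff.mpr ⟨hT.1 hyT, hyS⟩)).asymm
    (hT.2 y hyT x (mem_sdiff.mpr ⟨hS.1 hxS, hxT⟩))

theorem inter (hS : IsInitialSegment S L) (hT : T ⊆ L) : IsInitialSegment (S ∩ T) T :=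
  ⟨inter_subset_right, fun x hx y hy => by
    obtain ⟨hyT, hyST⟩ := mem_sdiff.mp hy
    exact hS.2 x (mem_inter.mp hx).1 y
      (mem_sdiff.mpr ⟨hT hyT, fun hyS => hyST (mem_inter.mpr ⟨hyS, hyT⟩)⟩)⟩

theorem of_union_left {M T : Finset α} (hST : IsInitialSegment (S ∪ T) (L ∪ M))
    (hS : S ⊆ L) (hT : T ⊆ M) (hLM : Disjoint L M) : IsInitialSegment S L := by
  simpa only [union_inter_distrib_right, inter_eq_left.mpr hS, union_empty,
    disjoint_iff_inter_eq_empty.mp (hLM.symm.mono_left hT)] using hST.inter subset_union_left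

theorem erase (hS : IsInitialSegment S L) (a : α) : IsInitialSegment (S.erase a) (L.erase a) := by
  simpa only [inter_erase, inter_eq_left.mpr hS.1] using hS.inter (erase_subset a L)

theorem insert_right {a : α} (hS : IsInitialSegment S L) (ha : ∀ x ∈ S, x < a) :
    IsInitialSegment S (insert a L) := by
  refine ⟨hS.1.trans (subset_insert a L), fun x hx y hy => ?_⟩
  obtain ⟨rfl | hyL, hyS⟩ := by simpa only [mem_sdiff, mem_insert] using hy
  · exact ha x hx
  · exact hS.2 x hx y (mem_sdiff.mpr ⟨hyL, hyS⟩)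

theorem insert_both {a : α} (hS : IsInitialSegment S L) (ha : ∀ y ∈ L \ S, a < y) :
    IsInitialSegment (insert a S) (insert a L) := by
  refine ⟨insert_subset_insert a hS.1, fun x hx y hy => ?_⟩
  simp only [mem_sdiff, mem_insert, not_or] at hy
  obtain ⟨hyL, hya, hyS⟩ := hy
  have hy : y ∈ L \ S := mem_sdiff.mpr ⟨hyL.resolve_left hya, hyS⟩
  obtain rfl | hxS := mem_insert.mp hx
  · exact ha y hy
  · exact hS.2 x hxS y hy

end IsInitialSegment

end Finset

open Finset

section

variable {α : Type*} [LinearOrder α]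

theorem smallSet_card {m : ℕ} {L : Finset α} (hm : m ≤ L.card) : (smallSet m L).card = m := by
  rw [smallSet, List.toFinset_card_of_nodup ((List.take_sublist m _).nodup (L.sort_nodup _))]
  simp [hm]

theorem isInitialSegment_smallSet (m : ℕ) (L : Finset α) :
    IsInitialSegment (smallSet m L) L := by
  have hsplit := List.take_append_drop m (L.sort (· ≤ ·))
  have hsorted : (L.sort (· ≤ ·)).Pairwise (· < ·) := L.sortedLT_sort.pairwise
  rw [← hsplit, List.pairwise_append] at hsorted
  refine ⟨fun x hx => ?_, fun x hx y hy => ?_⟩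
  · rw [← mem_sort (· ≤ ·), ← hsplit]
    exact List.mem_append_left _ (List.mem_toFinset.mp hx)
  · rw [mem_sdiff, ← mem_sort (· ≤ ·), ← hsplit, List.mem_append] at hy
    exact hsorted.2.2 x (List.mem_toFinset.mp hx) y
      (hy.1.resolve_left (mt List.mem_toFinset.mpr hy.2))

theorem Finset.IsInitialSegment.smallSet_eq {m : ℕ} {S L : Finset α} (hS : IsInitialSegment S L)
    (hm : S.card = m) : smallSet m L = S :=
  (isInitialSegment_smallSet m L).eq_of_card_eq hS
    (smallSet_card (hm ▸ card_le_card hS.1) |>.trans hm.symm)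

theorem Finset.IsInitialSegment.smallSet_insert_erase {a b : α} {S L : Finset α}
    (hS : IsInitialSegment S L) (ha : a ∈ S) (hb : b ∉ L) (hlt : ∀ y ∈ L \ S, b < y) :
    smallSet S.card (insert b (L.erase a)) = insert b (S.erase a) := by
  have hlt' : ∀ y ∈ L.erase a \ S.erase a, b < y := fun y hy =>
    hlt y (by simp only [mem_sdiff, mem_erase] at hy ⊢; tauto)
  refine ((hS.erase a).insert_both hlt').smallSet_eq ?_
  rw [card_insert_of_notMem fun hb' => hb (mem_of_mem_erase ((hS.erase a).1 hb')),
    card_erase_add_one ha]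

end

/-- case 2 of the case analysis.  Invariant setting: `L_A, L_B` disjoint
with `|L_A| + |L_B| = 2h+1`, `S_A ⊆ L_A`, `S_B ⊆ L_B`, `S_A ∪ S_B = H_h(L_A ∪ L_B)`,
`a_A ∈ L_A`, `a_B ∉ L_A ∪ L_B`; `L' = (L_A \ {a_A}) ∪ L_B ∪ {a_B}`; updated small sets
`S'_A = H_{|S_A|-1}(L_A \ {a_A})` and `S'_B = H_{|S_B|}(L_B ∪ {a_B})`.
Assume `S_A ≠ ∅`, `a_A < p_A = max S_A`, every element of `S_B` is less than `a_B`, and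
`a_B` is less than every element of `L_A \ S_A` and of `L_B \ S_B`.  Then
`S'_A = S_A \ {a_A}`, `S'_B = S_B`, `a_B` is the B-side peek
(`a_B = min((L_B ∪ {a_B}) \ S'_B)`) and is less than every element of
`(L_A \ {a_A}) \ S'_A`, and `H_h(L') = (H_h(L_A ∪ L_B) \ {a_A}) ∪ {a_B} = S'_A ∪ S_B ∪ {a_B}`. -/
theorem invariant_case2 {α : Type*} [LinearOrder α] (h : ℕ)
    (LA LB SA SB : Finset α) (hdisj : Disjoint LA LB)
    (hcard : LA.card + LB.card = 2 * h + 1)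
    (hSA : SA ⊆ LA) (hSB : SB ⊆ LB)
    (hinv : SA ∪ SB = smallSet h (LA ∪ LB))
    (aA aB : α) (haA : aA ∈ LA) (haB : aB ∉ LA ∪ LB)
    (hSAne : SA.Nonempty)
    (h1 : aA < SA.max' hSAne)
    (h2 : ∀ x ∈ SB, x < aB)
    (h3 : ∀ x ∈ LA \ SA, aB < x)
    (h4 : ∀ x ∈ LB \ SB, aB < x) :
    smallSet (SA.card - 1) (LA \ {aA}) = SA \ {aA} ∧
    smallSet SB.card (LB ∪ {aB}) = SB ∧
    ((LB ∪ {aB}) \ smallSet SB.card (LB ∪ {aB})).min = (aB : WithTop α) ∧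
    (∀ x ∈ (LA \ {aA}) \ smallSet (SA.card - 1) (LA \ {aA}), aB < x) ∧
    smallSet h ((LA \ {aA}) ∪ LB ∪ {aB}) = (smallSet h (LA ∪ LB) \ {aA}) ∪ {aB} ∧
    smallSet h ((LA \ {aA}) ∪ LB ∪ {aB}) =
      smallSet (SA.card - 1) (LA \ {aA}) ∪ SB ∪ {aB} := by
  have hH : IsInitialSegment (SA ∪ SB) (LA ∪ LB) := hinv ▸ isInitialSegment_smallSet h _
  have hHcard : (SA ∪ SB).card = h :=
    hinv ▸ smallSet_card (by rw [card_union_of_disjoint hdisj]; omega)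
  have hA : IsInitialSegment SA LA := hH.of_union_left hSA hSB hdisj
  have hB : IsInitialSegment SB LB :=
    (union_comm SB SA ▸ union_comm LB LA ▸ hH).of_union_left hSB hSA hdisj.symm
  have haASA : aA ∈ SA := by
    by_contra haASA
    exact h1.not_gt (hA.2 _ (SA.max'_mem hSAne) aA (mem_sdiff.mpr ⟨haA, haASA⟩))
  have haASB : aA ∉ SB := fun ha => disjoint_left.mp hdisj haA (hSB ha)
  have haBSB : aB ∉ SB := fun ha => haB (mem_union_right _ (hSB ha))
  have hA' : smallSet (SA.card - 1) (LA \ {aA}) = SA \ {aA} := by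
    simpa only [sdiff_singleton_eq_erase] using (hA.erase aA).smallSet_eq (card_erase_of_mem haASA)
  have hB' : smallSet SB.card (LB ∪ {aB}) = SB := by
    rw [union_singleton]; exact (hB.insert_right h2).smallSet_eq rfl
  have haB_lt : ∀ y ∈ (LA ∪ LB) \ (SA ∪ SB), aB < y := by
    simp only [mem_sdiff, mem_union, not_or]
    rintro y ⟨hyA | hyB, hySA, hySB⟩
    exacts [h3 y (mem_sdiff.mpr ⟨hyA, hySA⟩), h4 y (mem_sdiff.mpr ⟨hyB, hySB⟩)]
  have hH' : smallSet h ((LA \ {aA}) ∪ LB ∪ {aB}) = ((SA ∪ SB) \ {aA}) ∪ {aB} := by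
    rw [← hHcard, union_singleton, union_singleton, sdiff_singleton_eq_erase,
      sdiff_singleton_eq_erase, ← erase_eq_of_notMem (disjoint_left.mp hdisj haA),
      ← erase_union_distrib]
    exact hH.smallSet_insert_erase (mem_union_left _ haASA) haB haB_lt
  refine ⟨hA', hB', ?_, ?_, by rw [hH', hinv], ?_⟩
  · rw [hB', union_singleton, insert_sdiff_of_notMem _ haBSB]
    exact min_insert_of_forall_le fun y hy => (h4 y hy).le
  · rw [hA', sdiff_sdiff_sdiff_cancel_right (singleton_subset_iff.mpr haASA)]
    exact h3
  · rw [hH', hA', union_sdiff_distrib, sdiff_singleton_eq_erase aA SB, erase_eq_of_notMem haASB]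
end

section
/- Assume the invariant setting with S_A ≠ ∅ and S_B ≠ ∅, and write p_A = max S_A and p_B = max S_B. Assume p_A ≤ a_A and a_B < p_B < p_A (case 6 of the case analysis). Then: S'_A = S_A \ {p_A}; S'_B = (S_B \ {p_B}) ∪ {a_B}; p_B is the B-side peek, i.e. p_B = min((L_B ∪ {a_B}) \ S'_B), and p_B is less than every element of (L_A \ {a_A}) \ S'_A; and H_h(L') = (H_h(L_A ∪ L_B) \ {p_A}) ∪ {a_B} = S'_A ∪ S'_B ∪ {p_B}. -/
open Finset

section

variable {α : Type*} [LinearOrder α]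

def IsInitialIn (S L : Finset α) : Prop :=
  S ⊆ L ∧ ∀ x ∈ S, ∀ y ∈ L, y ∉ S → x < y

namespace IsInitialIn

variable {S T L M : Finset α}

theorem subset_of_card_le (hS : IsInitialIn S L) (hT : IsInitialIn T L)
    (hcard : S.card ≤ T.card) : S ⊆ T := by
  intro x hxS
  by_contra hxT
  have hTS : T ⊆ S := fun t htT => by
    by_contra htS
    exact lt_asymm (hS.2 x hxS t (hT.1 htT) htS) (hT.2 t htT x (hS.1 hxS) hxT)
  have := card_lt_card ((ssubset_iff_of_subset hTS).2 ⟨x, hxS, hxT⟩)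
  omega

theorem mono (h : IsInitialIn T L) (hTM : T ⊆ M) (hML : M ⊆ L) : IsInitialIn T M :=
  ⟨hTM, fun x hx y hy => h.2 x hx y (hML hy)⟩

theorem of_union (h : IsInitialIn (S ∪ T) L) (hSM : S ⊆ M) (hML : M ⊆ L)
    (hMT : Disjoint M T) : IsInitialIn S M :=
  ⟨hSM, fun x hx y hy hyS => h.2 x (mem_union_left _ hx) y (hML hy)
    (by simp [hyS, disjoint_left.1 hMT hy])⟩

theorem erase_of_forall_le {p : α} (h : IsInitialIn S L) (hp : ∀ x ∈ S, x ≤ p) :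
    IsInitialIn (S.erase p) L := by
  refine ⟨(erase_subset p S).trans h.1, fun x hx y hy hyS => ?_⟩
  rcases eq_or_ne y p with rfl | hyp
  · exact lt_of_le_of_ne (hp x (mem_of_mem_erase hx)) (ne_of_mem_erase hx)
  · exact h.2 x (mem_of_mem_erase hx) y hy (fun hyS' => hyS (mem_erase_of_ne_of_mem hyp hyS'))

theorem le_of_notMem_erase {p y : α} (h : IsInitialIn S L) (hp : p ∈ S) (hy : y ∈ L)
    (hyS : y ∉ S.erase p) : p ≤ y := by
  rcases eq_or_ne y p with rfl | hyp
  · exact le_rfl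
  · exact (h.2 p hp y hy fun hyS' => hyS (mem_erase_of_ne_of_mem hyp hyS')).le

theorem insert_insert {b : α} (h : IsInitialIn T M) (hb : ∀ y ∈ M, y ∉ T → b < y) :
    IsInitialIn (insert b T) (insert b M) := by
  refine ⟨insert_subset_insert b h.1, fun x hx y hy hyT => ?_⟩
  have hyb : y ≠ b := fun hyb => hyT (hyb ▸ mem_insert_self y T)
  have hyM : y ∈ M := (mem_insert.1 hy).resolve_left hyb
  have hyT' : y ∉ T := fun hyT' => hyT (mem_insert_of_mem hyT')
  rcases mem_insert.1 hx with rfl | hxT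
  · exact hb y hyM hyT'
  · exact h.2 x hxT y hyM hyT'

theorem erase_erase_of_le {p a : α} (h : IsInitialIn S L) (hmax : ∀ x ∈ S, x ≤ p)
    (ha : p ≤ a) : IsInitialIn (S.erase p) (L.erase a) :=
  (h.erase_of_forall_le hmax).mono
    (fun x hx => mem_erase.2 ⟨((lt_of_le_of_ne (hmax x (mem_of_mem_erase hx))
      (ne_of_mem_erase hx)).trans_le ha).ne, h.1 (mem_of_mem_erase hx)⟩)
    (erase_subset a L)

theorem min_sdiff_erase {p : α} (h : IsInitialIn S L) (hp : p ∈ S) :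
    (L \ S.erase p).min = p := by
  have hmem : p ∈ L \ S.erase p := mem_sdiff.2 ⟨h.1 hp, notMem_erase p S⟩
  refine le_antisymm (Finset.min_le hmem) (Finset.le_min fun y hy => ?_)
  exact WithTop.coe_le_coe.2 (h.le_of_notMem_erase hp (mem_sdiff.1 hy).1 (mem_sdiff.1 hy).2)

end IsInitialIn

theorem smallSet_subset (m : ℕ) (L : Finset α) : smallSet m L ⊆ L := fun x hx => by
  rw [smallSet, List.mem_toFinset] at hx
  exact (mem_sort _).1 (List.mem_of_mem_take hx)

theorem card_smallSet (m : ℕ) (L : Finset α) : (smallSet m L).card = min m L.card := by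
  rw [smallSet, List.toFinset_card_of_nodup ((L.sort_nodup _).sublist (List.take_sublist _ _)),
    List.length_take, length_sort]

theorem isInitialIn_smallSet (m : ℕ) (L : Finset α) : IsInitialIn (smallSet m L) L := by
  refine ⟨smallSet_subset m L, fun x hx y hy hyS => ?_⟩
  rw [smallSet, List.mem_toFinset] at hx hyS
  rw [← mem_sort (α := α) (· ≤ ·), ← List.take_append_drop m (L.sort (· ≤ ·)),
    List.mem_append] at hy
  have hsorted := L.sortedLT_sort.pairwise
  rw [← List.take_append_drop m (L.sort (· ≤ ·)), List.pairwise_append] at hsorted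
  exact hsorted.2.2 x hx y (hy.resolve_left hyS)

theorem IsInitialIn.smallSet_card_eq {S L : Finset α} (h : IsInitialIn S L) :
    smallSet S.card L = S := by
  have hcard : (smallSet S.card L).card = S.card := by
    rw [card_smallSet, min_eq_left (card_le_card h.1)]
  exact eq_of_subset_of_card_le
    ((isInitialIn_smallSet _ L).subset_of_card_le h hcard.le) hcard.ge

theorem IsInitialIn.smallSet_insert_erase_of_lt {S L M : Finset α} {p b : α}
    (h : IsInitialIn S L) (hp : p ∈ S) (hmax : ∀ x ∈ S, x ≤ p) (hb : b < p) (hbL : b ∉ L)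
    (hM : S.erase p ⊆ M) (hML : M ⊆ L) :
    smallSet S.card (insert b M) = insert b (S.erase p) := by
  have hcard : (insert b (S.erase p)).card = S.card := by
    rw [card_insert_of_notMem fun hb' => hbL (h.1 (mem_of_mem_erase hb')), card_erase_add_one hp]
  rw [← hcard]
  refine (((h.erase_of_forall_le hmax).mono hM hML).insert_insert fun _ hy hyS => ?_)
    |>.smallSet_card_eq
  exact hb.trans_le (h.le_of_notMem_erase hp (hML hy) hyS)

theorem IsInitialIn.smallSet_pred_card_sdiff {S L : Finset α} {a : α} (h : IsInitialIn S L)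
    (hS : S.Nonempty) (ha : S.max' hS ≤ a) :
    smallSet (S.card - 1) (L \ {a}) = S \ {S.max' hS} := by
  rw [sdiff_singleton_eq_erase, sdiff_singleton_eq_erase, ← card_erase_of_mem (S.max'_mem hS)]
  exact (h.erase_erase_of_le (S.le_max' ·) ha).smallSet_card_eq

theorem IsInitialIn.smallSet_card_union_singleton {S L : Finset α} {b : α}
    (h : IsInitialIn S L) (hS : S.Nonempty) (hb : b < S.max' hS) (hbL : b ∉ L) :
    smallSet S.card (L ∪ {b}) = (S \ {S.max' hS}) ∪ {b} := by
  rw [sdiff_singleton_eq_erase, union_singleton, union_singleton]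
  exact h.smallSet_insert_erase_of_lt (S.max'_mem hS) (S.le_max' ·) hb hbL
    ((erase_subset _ _).trans h.1) subset_rfl

end

theorem invariant_case6_general {α : Type*} [LinearOrder α] (h : ℕ)
    (LA LB SA SB : Finset α) (hdisj : Disjoint LA LB)
    (hcard : LA.card + LB.card = 2 * h + 1)
    (hSA : SA ⊆ LA) (hSB : SB ⊆ LB)
    (hinv : SA ∪ SB = smallSet h (LA ∪ LB))
    (aA aB : α) (haB : aB ∉ LA ∪ LB)
    (hSAne : SA.Nonempty) (hSBne : SB.Nonempty)
    (h1 : SA.max' hSAne ≤ aA)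
    (h2 : aB < SB.max' hSBne)
    (h3 : SB.max' hSBne < SA.max' hSAne) :
    smallSet (SA.card - 1) (LA \ {aA}) = SA \ {SA.max' hSAne} ∧
    smallSet SB.card (LB ∪ {aB}) = (SB \ {SB.max' hSBne}) ∪ {aB} ∧
    ((LB ∪ {aB}) \ smallSet SB.card (LB ∪ {aB})).min = (SB.max' hSBne : WithTop α) ∧
    (∀ x ∈ (LA \ {aA}) \ smallSet (SA.card - 1) (LA \ {aA}), SB.max' hSBne < x) ∧
    smallSet h ((LA \ {aA}) ∪ LB ∪ {aB}) =
      (smallSet h (LA ∪ LB) \ {SA.max' hSAne}) ∪ {aB} ∧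
    smallSet h ((LA \ {aA}) ∪ LB ∪ {aB}) =
      smallSet (SA.card - 1) (LA \ {aA}) ∪ smallSet SB.card (LB ∪ {aB}) ∪
        {SB.max' hSBne} := by
  set pA := SA.max' hSAne
  set pB := SB.max' hSBne
  have hpA : pA ∈ SA := SA.max'_mem hSAne
  have hpB : pB ∈ SB := SB.max'_mem hSBne
  have hH : IsInitialIn (SA ∪ SB) (LA ∪ LB) := hinv ▸ isInitialIn_smallSet h _
  have hHcard : (SA ∪ SB).card = h := by
    rw [hinv, card_smallSet, card_union_of_disjoint hdisj]
    omega
  have hA : IsInitialIn SA LA := hH.of_union hSA subset_union_left (hdisj.mono_right hSB)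
  have hB : IsInitialIn SB LB := by
    rw [union_comm SA, union_comm LA] at hH
    exact hH.of_union hSB subset_union_left (hdisj.symm.mono_right hSA)
  have hHmax : ∀ x ∈ SA ∪ SB, x ≤ pA := fun x hx =>
    (mem_union.1 hx).elim (SA.le_max' x) fun hxB => (SB.le_max' x hxB).trans h3.le
  have e1 : smallSet (SA.card - 1) (LA \ {aA}) = SA \ {pA} := hA.smallSet_pred_card_sdiff hSAne h1
  have e2 : smallSet SB.card (LB ∪ {aB}) = (SB \ {pB}) ∪ {aB} :=
    hB.smallSet_card_union_singleton hSBne h2 (haB <| mem_union_right _ ·)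
  have e5 : smallSet h ((LA \ {aA}) ∪ LB ∪ {aB}) =
      (smallSet h (LA ∪ LB) \ {pA}) ∪ {aB} := by
    rw [← hinv]
    simp only [sdiff_singleton_eq_erase, union_singleton]
    rw [← hHcard]
    refine hH.smallSet_insert_erase_of_lt (mem_union_left _ hpA) hHmax (h2.trans h3) haB ?_
      (union_subset_union (erase_subset _ _) subset_rfl)
    exact (hH.erase_erase_of_le hHmax h1).1.trans
      (erase_union_distrib LA LB aA ▸ union_subset_union subset_rfl (erase_subset _ _))
  refine ⟨e1, e2, ?_, ?_, e5, ?_⟩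
  · rw [e2, sdiff_singleton_eq_erase, union_singleton, union_singleton, insert_sdiff_insert,
      sdiff_insert_of_notMem fun hB => haB (mem_union_right _ hB)]
    exact hB.min_sdiff_erase hpB
  · rw [e1, sdiff_singleton_eq_erase, sdiff_singleton_eq_erase]
    exact fun x hx => h3.trans_le (hA.le_of_notMem_erase hpA
      (mem_of_mem_erase (mem_sdiff.1 hx).1) (mem_sdiff.1 hx).2)
  · have hpASB : pA ∉ SB := fun h => (SB.le_max' _ h).not_gt h3
    rw [e5, e1, e2, ← hinv]
    ext x
    simp only [mem_union, mem_sdiff, mem_singleton]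
    grind

/-- case 6 of the case analysis.  Invariant setting: `L_A, L_B` disjoint
with `|L_A| + |L_B| = 2h+1`, `S_A ⊆ L_A`, `S_B ⊆ L_B`, `S_A ∪ S_B = H_h(L_A ∪ L_B)`,
`a_A ∈ L_A`, `a_B ∉ L_A ∪ L_B`; `L' = (L_A \ {a_A}) ∪ L_B ∪ {a_B}`; updated small sets
`S'_A = H_{|S_A|-1}(L_A \ {a_A})` and `S'_B = H_{|S_B|}(L_B ∪ {a_B})`.
Assume `S_A ≠ ∅`, `S_B ≠ ∅`, `p_A = max S_A ≤ a_A`, and `a_B < p_B = max S_B < p_A`.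
Then `S'_A = S_A \ {p_A}`, `S'_B = (S_B \ {p_B}) ∪ {a_B}`, `p_B` is the B-side peek
(`p_B = min((L_B ∪ {a_B}) \ S'_B)`) and is less than every element of
`(L_A \ {a_A}) \ S'_A`, and
`H_h(L') = (H_h(L_A ∪ L_B) \ {p_A}) ∪ {a_B} = S'_A ∪ S'_B ∪ {p_B}`. -/
theorem invariant_case6 {α : Type*} [LinearOrder α] (h : ℕ)
    (LA LB SA SB : Finset α) (hdisj : Disjoint LA LB)
    (hcard : LA.card + LB.card = 2 * h + 1)
    (hSA : SA ⊆ LA) (hSB : SB ⊆ LB)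
    (hinv : SA ∪ SB = smallSet h (LA ∪ LB))
    (aA aB : α) (haA : aA ∈ LA) (haB : aB ∉ LA ∪ LB)
    (hSAne : SA.Nonempty) (hSBne : SB.Nonempty)
    (h1 : SA.max' hSAne ≤ aA)
    (h2 : aB < SB.max' hSBne)
    (h3 : SB.max' hSBne < SA.max' hSAne) :
    smallSet (SA.card - 1) (LA \ {aA}) = SA \ {SA.max' hSAne} ∧
    smallSet SB.card (LB ∪ {aB}) = (SB \ {SB.max' hSBne}) ∪ {aB} ∧
    ((LB ∪ {aB}) \ smallSet SB.card (LB ∪ {aB})).min = (SB.max' hSBne : WithTop α) ∧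
    (∀ x ∈ (LA \ {aA}) \ smallSet (SA.card - 1) (LA \ {aA}), SB.max' hSBne < x) ∧
    smallSet h ((LA \ {aA}) ∪ LB ∪ {aB}) =
      (smallSet h (LA ∪ LB) \ {SA.max' hSAne}) ∪ {aB} ∧
    smallSet h ((LA \ {aA}) ∪ LB ∪ {aB}) =
      smallSet (SA.card - 1) (LA \ {aA}) ∪ smallSet SB.card (LB ∪ {aB}) ∪
        {SB.max' hSBne} :=
  invariant_case6_general h LA LB SA SB hdisj hcard hSA hSB hinv aA aB haB hSAne hSBne h1 h2 h3
end
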